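/- arXiv:2111.12562 — 4 statements merged into one kernel-verified Lean document; each statement's English description precedes it below -/
import Mathlib

section
/- Let W be a type of worlds and R : W → W → Prop an accessibility relation that is reflexive and euclidean (an S5 frame). Let q : W → Prop and let w : W. If □(q → □q) holds at w (i.e., for every v with R w v, q v implies that q u holds for every u with R v u), and ◇q holds at w (i.e., there exists v with R w v and q v), then □q holds at w (i.e., q v for every v with R w v) and moreover q w holds. (This is the semantic content of Hartshorne's ten-step proof and of Schanno's simplified proof mp(t, mp(5, mp(mp(km, ap), ip))) in the modal logic S5: from Anselm's principle N(q → Nq) and the intuitive postulate Mq one infers Nq and q.) -/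
theorem hartshorne_s5
    (W : Type*) (R : W → W → Prop)
    (hrefl : ∀ w, R w w)
    (heucl : ∀ w v u, R w v → R w u → R v u)
    (q : W → Prop) (w : W)
    (ap : ∀ v, R w v → (q v → ∀ u, R v u → q u))
    (ip : ∃ v, R w v ∧ q v) :
    (∀ v, R w v → q v) ∧ q w := by
  obtain ⟨v, hwv, hqv⟩ := ip
  have box : ∀ u, R w u → q u := fun u hwu =>
    ap v hwv hqv u (heucl w v u hwv hwu)
  exact ⟨box, box w (hrefl w)⟩
end

section
/- Let W be a type of worlds and R : W → W → Prop an accessibility relation that is symmetric. Let q : W → Prop and let w : W. If □(q → □q) holds at w (i.e., for every v with R w v, q v implies that q u holds for every u with R v u), and ◇q holds at w (i.e., there exists v with R w v and q v), then q w holds. (This shows semantically that the modal logic KB, whose frames are the symmetric frames, already suffices for Hartshorne's ontological argument if one only wants God's existence in the actual world: the proof mp(b, mp(mp(km, ap), ip)).) -/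
theorem hartshorne_kb
    (W : Type*) (R : W → W → Prop)
    (hsymm : ∀ w v, R w v → R v w)
    (q : W → Prop) (w : W)
    (ap : ∀ v, R w v → (q v → ∀ u, R v u → q u))
    (ip : ∃ v, R w v ∧ q v) :
    q w := by
  obtain ⟨v, hwv, hqv⟩ := ip
  exact ap v hwv hqv w (hsymm w v hwv)
end

section
/- Let W be a type of worlds and R : W → W → Prop a symmetric accessibility relation, and let q : W → Prop. Then the schema of Proslogion II, ◇q → q, holds at every world (i.e., for all w, if there exists v with R w v and q v then q w) if and only if the schema of Proslogion III, q → □q, holds at every world (i.e., for all w, q w implies q v for every v with R w v). (Anselm's two modal principles N(Mq → q) and N(q → Nq) are equivalent in the logic KB, as claimed against Hartshorne's insistence that the Proslogion III form is by far stronger; the same equivalence shows that Gödel's two 1970 axiom variants P(φ) → NP(φ) and MP(φ) → P(φ) are equivalent in KB.) -/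
theorem proslogion_II_iff_III_in_KB
    (W : Type*) (R : W → W → Prop)
    (hsymm : ∀ w v, R w v → R v w)
    (q : W → Prop) :
    (∀ w, (∃ v, R w v ∧ q v) → q w) ↔ (∀ w, q w → ∀ v, R w v → q v) := by
  constructor
  · intro h w hq v hR
    exact h v ⟨w, hsymm w v hR, hq⟩
  · rintro h w ⟨v, hR, hq⟩
    exact h v hq w (hsymm w v hR)
end

section
/- Let W be a type of worlds and R : W → W → Prop any accessibility relation. Let p, n : W → Prop satisfy the polarity law at every world: for all w, p w holds if and only if n w fails (p plays the role of P(φ) and n of P(¬φ), with P(φ) ↔ ¬P(¬φ)). Then the following are equivalent: (a) both p → □p and n → □n hold at every world (for all w, p w implies p v for every v with R w v, and likewise for n); (b) both ◇p → p and ◇n → n hold at every world (for all w, if there is v with R w v and p v then p w, and likewise for n). (In the presence of the axiom P(φ) ↔ ¬P(¬φ), the logic K already suffices for the equivalence of Gödel's two 1970 axiom variants P(φ) → NP(φ) and ¬P(φ) → N¬P(φ), i.e. MP(φ) → P(φ).) -/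
theorem godel_variants_equiv_in_K
    (W : Type*) (R : W → W → Prop)
    (p n : W → Prop)
    (hpol : ∀ w, p w ↔ ¬ n w) :
    ((∀ w, p w → ∀ v, R w v → p v) ∧ (∀ w, n w → ∀ v, R w v → n v)) ↔
    ((∀ w, (∃ v, R w v ∧ p v) → p w) ∧ (∀ w, (∃ v, R w v ∧ n v) → n w)) := by
  constructor
  · rintro ⟨hp, hn⟩
    constructor
    · rintro w ⟨v, hRv, hpv⟩
      by_contra hpw
      have hnw : n w := not_not.mp (fun h => hpw ((hpol w).mpr h))
      exact (hpol v).mp hpv (hn w hnw v hRv)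
    · rintro w ⟨v, hRv, hnv⟩
      by_contra hnw
      exact (hpol v).mp (hp w ((hpol w).mpr hnw) v hRv) hnv
  · rintro ⟨hp, hn⟩
    constructor
    · intro w hpw v hRv
      by_contra hpv
      have hnv : n v := not_not.mp (fun h => hpv ((hpol v).mpr h))
      exact (hpol w).mp hpw (hn w ⟨v, hRv, hnv⟩)
    · intro w hnw v hRv
      by_contra hnv
      have hpv : p v := (hpol v).mpr hnv
      exact (hpol w).mp (hp w ⟨v, hRv, hpv⟩) hnw
end
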